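/- arXiv:1711.02620 — 9 statements merged into one kernel-verified Lean document; each statement's English description precedes it below -/
import Mathlib

section
/- If a graph G is bipartite, then there exists no probability measure μ with full support on V satisfying μ(I) < μ(E(I)) for every independent set I of G; conversely, if G is non-bipartite and connected, such a measure exists. -/
/-!
If `G` is bipartite with sides `A` and `B`, the condition gives `μ(A) < μ(E(A)) ≤ μ(B)` and
symmetrically `μ(B) < μ(A)`. Conversely, if `G` is connected and not bipartite, the degree
measure `μ(v) = deg v / 2|E|` works: counting the edges between an independent set `I` and
`E(I)` gives `deg(I) ≤ deg(E(I))`, with equality only if no edge leaves `E(I)` outside `I`.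
By connectivity `I ∪ E(I)` would then be all of `V`, and `(I, E(I))` a bipartition of `G`.
-/

open Finset

/-- The stability condition `Ncond`: a full-support probability vector `μ` on the
vertices such that `μ(I) < μ(E(I))` for every independent set `I`. -/
def NcondMeasure {V : Type*} [Fintype V] (G : SimpleGraph V) [DecidableRel G.Adj]
    (μ : V → ℝ) : Prop :=
  (∀ v, 0 < μ v) ∧ (∑ v, μ v = 1) ∧
    ∀ I : Finset V, I.Nonempty → (∀ a ∈ I, ∀ b ∈ I, ¬ G.Adj a b) →
      ∑ i ∈ I, μ i < ∑ v ∈ Finset.univ.filter (fun v => ∃ u ∈ I, G.Adj u v), μ v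

namespace SimpleGraph

lemma Reachable.mem_of_adj_closed {V : Type*} {G : SimpleGraph V} {s : Set V}
    (hs : ∀ u v, G.Adj u v → u ∈ s → v ∈ s) {u v : V} (h : G.Reachable u v) (hu : u ∈ s) :
    v ∈ s := by
  obtain ⟨p⟩ := h
  induction p with
  | nil => exact hu
  | cons hadj _ ih => exact ih (hs _ _ hadj hu)

variable {V : Type*} [Fintype V] {G : SimpleGraph V} [DecidableRel G.Adj]

variable (G) in
/-- The neighbourhood `E(I)` of `I`. -/
def nbhdFinset (I : Finset V) : Finset V := {v | ∃ u ∈ I, G.Adj u v}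

@[simp]
lemma mem_nbhdFinset {I : Finset V} {v : V} : v ∈ G.nbhdFinset I ↔ ∃ u ∈ I, G.Adj u v := by
  simp [nbhdFinset]

lemma Coloring.nbhdFinset_filter_eq_subset (C : G.Coloring Bool) (b : Bool) :
    G.nbhdFinset {v | C v = b} ⊆ ({v | C v = !b} : Finset V) := by
  intro v hv
  obtain ⟨u, hu, huv⟩ := mem_nbhdFinset.mp hv
  simp only [mem_filter, mem_univ, true_and] at hu ⊢
  exact Bool.eq_not_iff.mpr (hu ▸ C.valid huv).symm

lemma filter_adj_subset_neighborFinset (s : Finset V) (w : V) :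
    {u ∈ s | G.Adj u w} ⊆ G.neighborFinset w := fun u hu =>
  (G.mem_neighborFinset w u).mpr (mem_filter.mp hu).2.symm

lemma card_filter_adj_lt_degree {s : Finset V} {w x : V} (hx : x ∉ s) (hwx : G.Adj w x) :
    #{u ∈ s | G.Adj u w} < G.degree w :=
  card_lt_card <| (ssubset_iff_of_subset (filter_adj_subset_neighborFinset s w)).mpr
    ⟨x, (G.mem_neighborFinset w x).mpr hwx, fun hx' => hx (mem_filter.mp hx').1⟩

lemma sum_degree_eq_sum_card_filter_adj (I : Finset V) :
    ∑ v ∈ I, G.degree v = ∑ w ∈ G.nbhdFinset I, #{u ∈ I | G.Adj u w} := by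
  calc ∑ v ∈ I, G.degree v = ∑ v ∈ I, #((G.nbhdFinset I).bipartiteAbove G.Adj v) := by
        refine sum_congr rfl fun v hv => ?_
        rw [← card_neighborFinset_eq_degree]
        congr 1
        ext w
        simpa using fun hvw => ⟨v, hv, hvw⟩
    _ = _ := sum_card_bipartiteAbove_eq_sum_card_bipartiteBelow _

lemma exists_nbhdFinset_adj_notMem (hconn : G.Connected) (hncol : ¬ G.Colorable 2)
    {I : Finset V} (hI : I.Nonempty) (hind : ∀ a ∈ I, ∀ b ∈ I, ¬ G.Adj a b) :
    ∃ w ∈ G.nbhdFinset I, ∃ x ∉ I, G.Adj w x := by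
  by_contra! hclosed
  have hstep : ∀ w ∈ G.nbhdFinset I, ∀ x, G.Adj w x → x ∈ I := fun w hw x hwx =>
    by_contra fun hx => hclosed w hw x hx hwx
  obtain ⟨u, hu⟩ := hI
  have hcover : ∀ v, v ∈ I ∨ v ∈ G.nbhdFinset I := fun v =>
    (hconn.preconnected u v).mem_of_adj_closed (s := {v | v ∈ I ∨ v ∈ G.nbhdFinset I})
      (fun a b hab ha => ha.elim (fun ha => Or.inr (mem_nbhdFinset.mpr ⟨a, ha, hab⟩))
        (fun ha => Or.inl (hstep a ha b hab)))
      (Or.inl hu)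
  have hvalid : ∀ {a b : V}, G.Adj a b → (a ∈ I) ≠ (b ∈ I) := by
    intro a b hab hIab
    by_cases ha : a ∈ I
    · exact hind a ha b (hIab ▸ ha) hab
    · exact ha (hIab ▸ hstep a ((hcover a).resolve_left ha) b hab)
  exact hncol (by simpa using (Coloring.mk (fun v => v ∈ I) hvalid).colorable)

lemma sum_degree_lt_sum_degree_nbhdFinset (hconn : G.Connected) (hncol : ¬ G.Colorable 2)
    {I : Finset V} (hI : I.Nonempty) (hind : ∀ a ∈ I, ∀ b ∈ I, ¬ G.Adj a b) :
    ∑ v ∈ I, G.degree v < ∑ v ∈ G.nbhdFinset I, G.degree v := by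
  obtain ⟨w, hw, x, hx, hwx⟩ := exists_nbhdFinset_adj_notMem hconn hncol hI hind
  rw [sum_degree_eq_sum_card_filter_adj]
  exact sum_lt_sum (fun w _ => card_le_card (filter_adj_subset_neighborFinset I w))
    ⟨w, hw, card_filter_adj_lt_degree hx hwx⟩

end SimpleGraph

namespace NcondMeasure

variable {V : Type*} [Fintype V] {G : SimpleGraph V} [DecidableRel G.Adj] {μ : V → ℝ}

lemma sum_lt_sum_of_nbhdFinset_subset (hμ : NcondMeasure G μ) {I J : Finset V}
    (hI : I.Nonempty) (hind : ∀ a ∈ I, ∀ b ∈ I, ¬ G.Adj a b) (hIJ : G.nbhdFinset I ⊆ J) :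
    ∑ v ∈ I, μ v < ∑ v ∈ J, μ v :=
  (hμ.2.2 I hI hind).trans_le (sum_le_sum_of_subset_of_nonneg hIJ fun v _ _ => (hμ.1 v).le)

lemma not_colorable_two (hμ : NcondMeasure G μ) : ¬ G.Colorable 2 := by
  rintro ⟨C⟩
  let C' := G.recolorOfEquiv finTwoEquiv C
  let A : Bool → Finset V := fun b => {v | C' v = b}
  have hA : ∀ b, (A b).Nonempty → ∑ v ∈ A b, μ v < ∑ v ∈ A (!b), μ v := fun b hb =>
    hμ.sum_lt_sum_of_nbhdFinset_subset hb (fun x hx y hy hxy => C'.valid hxy (by simp_all [A]))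
      (C'.nbhdFinset_filter_eq_subset b)
  obtain ⟨v, -⟩ := nonempty_of_sum_ne_zero (hμ.2.1 ▸ one_ne_zero)
  have hv : (A (C' v)).Nonempty := ⟨v, by simp [A]⟩
  have hpos : 0 < ∑ v ∈ A (C' v), μ v := sum_pos (fun v _ => hμ.1 v) hv
  have h₁ := hA _ hv
  have h₂ := hA _ (nonempty_of_sum_ne_zero (hpos.trans h₁).ne')
  rw [Bool.not_not] at h₂
  linarith

lemma of_weights [Nonempty V] {f : V → ℝ} (hf : ∀ v, 0 < f v)
    (hfI : ∀ I : Finset V, I.Nonempty → (∀ a ∈ I, ∀ b ∈ I, ¬ G.Adj a b) →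
      ∑ v ∈ I, f v < ∑ v ∈ G.nbhdFinset I, f v) :
    NcondMeasure G (fun v => f v / ∑ w, f w) := by
  have htot : 0 < ∑ w, f w := sum_pos (fun v _ => hf v) univ_nonempty
  refine ⟨fun v => div_pos (hf v) htot, by rw [← sum_div, div_self htot.ne'], ?_⟩
  intro I hI hind
  rw [← sum_div, ← sum_div]
  exact div_lt_div_of_pos_right (hfI I hI hind) htot

end NcondMeasure

lemma ncondMeasure_degree {V : Type*} [Fintype V] {G : SimpleGraph V} [DecidableRel G.Adj]
    (hconn : G.Connected) (hncol : ¬ G.Colorable 2) :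
    NcondMeasure G (fun v => (G.degree v : ℝ) / ∑ w, (G.degree w : ℝ)) := by
  have : Nonempty V := hconn.nonempty
  have : Nontrivial V := not_subsingleton_iff_nontrivial.mp fun _ => hncol <|
    G.colorable_of_fintype.mono ((Fintype.card_le_one_iff_subsingleton.mpr ‹_›).trans one_le_two)
  refine .of_weights (fun v => by exact_mod_cast hconn.preconnected.degree_pos_of_nontrivial v) ?_
  intro I hI hind
  exact_mod_cast G.sum_degree_lt_sum_degree_nbhdFinset hconn hncol hI hind

theorem Ncond_nonempty_iff_nonbipartite_general {V : Type*} [Fintype V]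
    (G : SimpleGraph V) [DecidableRel G.Adj] :
    (G.Colorable 2 → ¬ ∃ μ : V → ℝ, NcondMeasure G μ) ∧
    (G.Connected → ¬ G.Colorable 2 → ∃ μ : V → ℝ, NcondMeasure G μ) :=
  ⟨fun hcol ⟨_, hμ⟩ => hμ.not_colorable_two hcol,
    fun hconn hncol => ⟨_, ncondMeasure_degree hconn hncol⟩⟩

/-- If `G` is bipartite there is no full-support probability measure satisfying the
natural condition `μ(I) < μ(E(I))` for all independent sets `I`; conversely if `G`
is connected and non-bipartite such a measure exists. -/
theorem Ncond_nonempty_iff_nonbipartite {V : Type*} [Fintype V] [DecidableEq V]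
    (G : SimpleGraph V) [DecidableRel G.Adj] :
    (G.Colorable 2 → ¬ ∃ μ : V → ℝ, NcondMeasure G μ) ∧
    (G.Connected → ¬ G.Colorable 2 → ∃ μ : V → ℝ, NcondMeasure G μ) :=
  Ncond_nonempty_iff_nonbipartite_general G
end

section
/- If a class-admissible matching policy φ is non-expansive (1-Lipschitz for the ℓ1 norm on class-detail vectors), then φ is sub-additive: for all finite arrival words z', z'' and corresponding preference words ς', ς'', the number of unmatched items satisfies |Q_φ(z'z'', ς'ς'')| ≤ |Q_φ(z', ς')| + |Q_φ(z'', ς'')|. -/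
open Finset

/-- ℓ1 distance between two class-detail vectors. -/
def l1Dist {V : Type*} [Fintype V] (x y : V → ℕ) : ℕ :=
  ∑ i, ((x i : ℤ) - (y i : ℤ)).natAbs

lemma sum_le_sum_add_l1Dist {V : Type*} [Fintype V] (x y : V → ℕ) :
    ∑ i, x i ≤ (∑ i, y i) + l1Dist x y := by
  rw [l1Dist, ← Finset.sum_add_distrib]
  apply Finset.sum_le_sum
  intro i _
  have := Int.natAbs_sub_le (x i : ℤ) (y i)
  omega

lemma foldl_nonexp {V : Type*} [Fintype V] (S : Type*)
    (step : (V → ℕ) → V → S → (V → ℕ))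
    (hnonexp : ∀ (x x' : V → ℕ) (v : V) (σ : S),
      l1Dist (step x v σ) (step x' v σ) ≤ l1Dist x x') :
    ∀ (l : List (V × S)) (x y : V → ℕ),
      l1Dist (l.foldl (fun x p => step x p.1 p.2) x)
        (l.foldl (fun x p => step x p.1 p.2) y) ≤ l1Dist x y := by
  intro l
  induction l with
  | nil => intro x y; simp
  | cons p t ih =>
      intro x y
      simp only [List.foldl_cons]
      exact (ih _ _).trans (hnonexp x y p.1 p.2)

/-- A non-expansive class-admissible matching policy is sub-additive: the number of
unmatched items left by a concatenated arrival word is at most the sum of the numbers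
of unmatched items left by the two pieces. -/
theorem nonexpansive_implies_subadditive {V : Type*} [Fintype V] [DecidableEq V]
    (G : SimpleGraph V) (S : Type*)
    (step : (V → ℕ) → V → S → (V → ℕ))
    -- class-admissibility: an arrival with a compatible nonempty class removes one
    -- item of a compatible class, otherwise it is added to the buffer
    (hmatch : ∀ (x : V → ℕ) (v : V) (σ : S), (∃ j, G.Adj v j ∧ 0 < x j) →
      ∃ j, G.Adj v j ∧ 0 < x j ∧ step x v σ = fun i => if i = j then x i - 1 else x i)
    (hnomatch : ∀ (x : V → ℕ) (v : V) (σ : S), (¬ ∃ j, G.Adj v j ∧ 0 < x j) →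
      step x v σ = fun i => if i = v then x i + 1 else x i)
    -- non-expansiveness for the ℓ1 norm
    (hnonexp : ∀ (x x' : V → ℕ) (v : V) (σ : S),
      l1Dist (step x v σ) (step x' v σ) ≤ l1Dist x x') :
    ∀ z' z'' : List (V × S),
      ∑ i, ((z' ++ z'').foldl (fun x p => step x p.1 p.2) (fun _ => 0)) i
        ≤ (∑ i, (z'.foldl (fun x p => step x p.1 p.2) (fun _ => 0)) i)
          + ∑ i, (z''.foldl (fun x p => step x p.1 p.2) (fun _ => 0)) i := by
  intro z' z''
  rw [List.foldl_append]
  set a := z'.foldl (fun x p => step x p.1 p.2) (fun _ => 0) with ha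
  calc ∑ i, (z''.foldl (fun x p => step x p.1 p.2) a) i
      ≤ (∑ i, (z''.foldl (fun x p => step x p.1 p.2) (fun _ => 0)) i)
        + l1Dist (z''.foldl (fun x p => step x p.1 p.2) a)
            (z''.foldl (fun x p => step x p.1 p.2) (fun _ => 0)) :=
        sum_le_sum_add_l1Dist _ _
    _ ≤ (∑ i, (z''.foldl (fun x p => step x p.1 p.2) (fun _ => 0)) i)
        + l1Dist a (fun _ => 0) := by
        exact Nat.add_le_add_left (foldl_nonexp S step hnonexp z'' a _) _
    _ = (∑ i, (z''.foldl (fun x p => step x p.1 p.2) (fun _ => 0)) i) + ∑ i, a i := by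
        simp [l1Dist]
    _ = _ := by rw [Nat.add_comm]
end

section
/- The First Come, First Matched policy is sub-additive: for any two finite arrival words z' and z'' over the vertex set of the compatibility graph, |Q_FCFM(z'z'')| ≤ |Q_FCFM(z')| + |Q_FCFM(z'')|, where Q_FCFM(z) is the word of unmatched items after matching the arrivals z under FCFM starting from an empty system. -/
set_option linter.unusedSectionVars false

variable {V : Type*} [DecidableEq V]

/-- One step of First Come, First Matched: the arriving item of class `v` is matched
with (removes) the oldest compatible item of the buffer `w` (listed oldest first), and
joins the buffer if there is none. -/
def fcfmStep (G : SimpleGraph V) [DecidableRel G.Adj] (w : List V) (v : V) : List V :=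
  match w.findIdx? (fun u => decide (G.Adj u v)) with
  | some k => w.eraseIdx k
  | none => w ++ [v]

/-- The buffer content after processing the arrival word `z` under FCFM from an empty
system. -/
def fcfmQ (G : SimpleGraph V) [DecidableRel G.Adj] (z : List V) : List V :=
  z.foldl (fcfmStep G) []

/-!
Call two buffers close when one arises from the other by inserting at most one item. One FCFM
step maps close buffers to close buffers: the arrival is treated alike in both unless it matches
the extra item, and then the other buffer changes by a single deletion or append. Since `Q(z')`
is joined to the empty buffer by `|Q(z')|` insertions, processing `z''` from `Q(z')` rather
than from the empty buffer adds at most `|Q(z')|` to the final length.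
-/

open Relation

def AtMostOneInsertion {α : Type*} (a b : List α) : Prop :=
  a.Sublist b ∧ b.length ≤ a.length + 1

namespace AtMostOneInsertion

variable {α : Type*} {a b : List α}

theorem refl (a : List α) : AtMostOneInsertion a a :=
  ⟨List.Sublist.refl a, by omega⟩

theorem cons_right (x : α) (a : List α) : AtMostOneInsertion a (x :: a) :=
  ⟨List.sublist_cons_self x a, by simp⟩

theorem cons_cons (x : α) (h : AtMostOneInsertion a b) :
    AtMostOneInsertion (x :: a) (x :: b) :=
  ⟨h.1.cons_cons x, by simpa using h.2⟩

theorem symmGen_cons_cons (x : α) (h : SymmGen AtMostOneInsertion a b) :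
    SymmGen AtMostOneInsertion (x :: a) (x :: b) :=
  h.imp (cons_cons x) (cons_cons x)

theorem symmGen_length_le (h : SymmGen AtMostOneInsertion a b) :
    a.length ≤ b.length + 1 := by
  rcases h with h | h
  · exact h.1.length_le.trans (Nat.le_succ _)
  · exact h.2

end AtMostOneInsertion

section FCFM

variable {α : Type*} (G : SimpleGraph α) [DecidableRel G.Adj]

theorem fcfmStep_cons (x v : α) (w : List α) :
    fcfmStep G (x :: w) v = if G.Adj x v then w else x :: fcfmStep G w v := by
  unfold fcfmStep
  rw [List.findIdx?_cons]
  by_cases hx : G.Adj x v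
  · simp [hx]
  · cases w.findIdx? (fun u => decide (G.Adj u v)) <;> simp [hx]

theorem symmGen_fcfmStep_self (w : List α) (v : α) :
    SymmGen AtMostOneInsertion (fcfmStep G w v) w := by
  induction w with
  | nil => exact .of_rel_symm (.cons_right v [])
  | cons x w ih =>
    rw [fcfmStep_cons]
    split_ifs
    · exact .of_rel (.cons_right x w)
    · exact AtMostOneInsertion.symmGen_cons_cons x ih

theorem AtMostOneInsertion.symmGen_fcfmStep {a b : List α} (h : AtMostOneInsertion a b)
    (v : α) : SymmGen AtMostOneInsertion (fcfmStep G a v) (fcfmStep G b v) := by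
  obtain ⟨hsub, hlen⟩ := h
  induction hsub with
  | slnil => exact .of_rel (.refl _)
  | @cons a b x hsub _ =>
    obtain rfl : a = b := hsub.eq_of_length_le (by simpa using hlen)
    rw [fcfmStep_cons]
    split_ifs
    · exact symmGen_fcfmStep_self G a v
    · exact .of_rel (.cons_right x _)
  | @cons_cons a b x hsub ih =>
    simp only [fcfmStep_cons]
    split_ifs
    · exact .of_rel ⟨hsub, by simpa using hlen⟩
    · exact AtMostOneInsertion.symmGen_cons_cons x (ih (by simpa using hlen))

theorem symmGen_foldl_fcfmStep {a b : List α}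
    (h : SymmGen AtMostOneInsertion a b) (z : List α) :
    SymmGen AtMostOneInsertion (z.foldl (fcfmStep G) a) (z.foldl (fcfmStep G) b) := by
  induction z generalizing a b with
  | nil => exact h
  | cons v z ih =>
    apply ih
    rcases h with h | h
    · exact h.symmGen_fcfmStep G v
    · exact (h.symmGen_fcfmStep G v).symm

theorem length_foldl_fcfmStep_le (w z : List α) :
    (z.foldl (fcfmStep G) w).length ≤ w.length + (fcfmQ G z).length := by
  induction w with
  | nil => simp [fcfmQ]
  | cons x w ih =>
    have := AtMostOneInsertion.symmGen_length_le <|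
      symmGen_foldl_fcfmStep G (.of_rel_symm (.cons_right x w)) z
    simp only [List.length_cons]
    omega

end FCFM

/-- **FCFM is sub-additive**: for any arrival words `z'`, `z''`,
`|Q_FCFM(z'z'')| ≤ |Q_FCFM(z')| + |Q_FCFM(z'')|`. -/
theorem fcfm_subadditive (G : SimpleGraph V) [DecidableRel G.Adj]
    (z' z'' : List V) :
    (fcfmQ G (z' ++ z'')).length ≤ (fcfmQ G z').length + (fcfmQ G z'').length := by
  rw [fcfmQ, List.foldl_append]
  exact length_foldl_fcfmStep_le G _ z''
end

section
/- The 'Match the Shortest' policy is not sub-additive: on the 4-vertex graph with edges 1–2, 2–3, 2–4, 3–4, the words z' = 11 and z'' = 133224 satisfy |Q_MS(z')| = 2, |Q_MS(z'')| = 0, but |Q_MS(z'z'')| = 4. -/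
open Finset

/-- The 4-vertex compatibility graph with edges 1–2, 2–3, 2–4, 3–4
(vertices `0,1,2,3` stand for classes `1,2,3,4`). -/
def pendantGraph : SimpleGraph (Fin 4) :=
  SimpleGraph.fromRel (fun u v =>
    (u, v) ∈ [((0 : Fin 4), (1 : Fin 4)), (1, 2), (1, 3), (2, 3)])

instance : DecidableRel pendantGraph.Adj := fun u v =>
  decidable_of_iff _ (SimpleGraph.fromRel_adj _ u v).symm

/-- Classes compatible with `v` having a nonempty queue in state `x`. -/
def compatSet (x : Fin 4 → ℕ) (v : Fin 4) : Finset (Fin 4) :=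
  Finset.univ.filter (fun j => pendantGraph.Adj v j ∧ 0 < x j)

/-- One step of the 'Match the Shortest' policy: the arriving `v`-item is matched to a
compatible class with a nonempty, shortest queue (ties broken by the linear order
`σ v`); if no compatible class has a nonempty queue, the item is added to the buffer. -/
def msStep (σ : Fin 4 → LinearOrder (Fin 4)) (x : Fin 4 → ℕ) (v : Fin 4) : Fin 4 → ℕ :=
  if h : (compatSet x v).Nonempty then
    let c := (compatSet x v).filter (fun j => x j = (compatSet x v).inf' h x)
    let k := @Finset.min' (Fin 4) (σ v) c (by
      obtain ⟨j, hj, hje⟩ := Finset.exists_mem_eq_inf' h x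
      exact ⟨j, Finset.mem_filter.2 ⟨hj, hje.symm⟩⟩)
    fun i => if i = k then x i - 1 else x i
  else fun i => if i = v then x i + 1 else x i

/-- Class detail after processing the arrival word `z` under Match the Shortest. -/
def msQ (σ : Fin 4 → LinearOrder (Fin 4)) (z : List (Fin 4)) : Fin 4 → ℕ :=
  z.foldl (msStep σ) (fun _ => 0)

lemma step_buffer (σ : Fin 4 → LinearOrder (Fin 4)) (x : Fin 4 → ℕ) (v : Fin 4)
    (h : compatSet x v = ∅) :
    msStep σ x v = fun i => if i = v then x i + 1 else x i := by
  unfold msStep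
  rw [dif_neg (by simp [h])]

lemma step_match (σ : Fin 4 → LinearOrder (Fin 4)) (x : Fin 4 → ℕ) (v k : Fin 4)
    (hne : (compatSet x v).Nonempty)
    (hfil : (compatSet x v).filter (fun j => x j = (compatSet x v).inf' hne x) = {k}) :
    msStep σ x v = fun i => if i = k then x i - 1 else x i := by
  unfold msStep
  rw [dif_pos hne]
  simp only [hfil, Finset.min'_singleton]

section steps
variable (σ : Fin 4 → LinearOrder (Fin 4))

lemma sA : msStep σ ![0,0,0,0] 0 = ![1,0,0,0] := by
  rw [step_buffer σ _ 0 (by decide)]; funext i; fin_cases i <;> rfl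
lemma sB : msStep σ ![1,0,0,0] 0 = ![2,0,0,0] := by
  rw [step_buffer σ _ 0 (by decide)]; funext i; fin_cases i <;> rfl
lemma sC : msStep σ ![2,0,0,0] 0 = ![3,0,0,0] := by
  rw [step_buffer σ _ 0 (by decide)]; funext i; fin_cases i <;> rfl
lemma sD : msStep σ ![1,0,0,0] 2 = ![1,0,1,0] := by
  rw [step_buffer σ _ 2 (by decide)]; funext i; fin_cases i <;> rfl
lemma sE : msStep σ ![1,0,1,0] 2 = ![1,0,2,0] := by
  rw [step_buffer σ _ 2 (by decide)]; funext i; fin_cases i <;> rfl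
lemma sF : msStep σ ![1,0,2,0] 1 = ![0,0,2,0] := by
  rw [step_match σ _ 1 0 (by decide) (by decide)]; funext i; fin_cases i <;> rfl
lemma sG : msStep σ ![0,0,2,0] 1 = ![0,0,1,0] := by
  rw [step_match σ _ 1 2 (by decide) (by decide)]; funext i; fin_cases i <;> rfl
lemma sH : msStep σ ![0,0,1,0] 3 = ![0,0,0,0] := by
  rw [step_match σ _ 3 2 (by decide) (by decide)]; funext i; fin_cases i <;> rfl
lemma sI : msStep σ ![3,0,0,0] 2 = ![3,0,1,0] := by
  rw [step_buffer σ _ 2 (by decide)]; funext i; fin_cases i <;> rfl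
lemma sJ : msStep σ ![3,0,1,0] 2 = ![3,0,2,0] := by
  rw [step_buffer σ _ 2 (by decide)]; funext i; fin_cases i <;> rfl
lemma sK : msStep σ ![3,0,2,0] 1 = ![3,0,1,0] := by
  rw [step_match σ _ 1 2 (by decide) (by decide)]; funext i; fin_cases i <;> rfl
lemma sL : msStep σ ![3,0,1,0] 1 = ![3,0,0,0] := by
  rw [step_match σ _ 1 2 (by decide) (by decide)]; funext i; fin_cases i <;> rfl
lemma sM : msStep σ ![3,0,0,0] 3 = ![3,0,0,1] := by
  rw [step_buffer σ _ 3 (by decide)]; funext i; fin_cases i <;> rfl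

lemma zero_state : (fun _ : Fin 4 => (0:ℕ)) = ![0,0,0,0] := by
  funext i; fin_cases i <;> rfl

lemma qShort : msQ σ [0,0] = ![2,0,0,0] := by
  simp only [msQ, List.foldl, zero_state, sA, sB]
lemma qMid : msQ σ [0,2,2,1,1,3] = ![0,0,0,0] := by
  simp only [msQ, List.foldl, zero_state, sA, sD, sE, sF, sG, sH]
lemma qLong : msQ σ [0,0,0,2,2,1,1,3] = ![3,0,0,1] := by
  simp only [msQ, List.foldl, zero_state, sA, sB, sC, sI, sJ, sK, sL, sM]

end steps

/-- **'Match the Shortest' is not sub-additive**: with `z' = 11` and `z'' = 133224`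
(encoded with classes `1,2,3,4 ↦ 0,1,2,3`), `|Q_MS(z')| = 2`, `|Q_MS(z'')| = 0`,
but `|Q_MS(z'z'')| = 4 > 2 + 0`. -/
theorem ms_not_subadditive (σ : Fin 4 → LinearOrder (Fin 4)) :
    (∑ i, msQ σ [0, 0] i) = 2 ∧
    (∑ i, msQ σ [0, 2, 2, 1, 1, 3] i) = 0 ∧
    (∑ i, msQ σ [0, 0, 0, 2, 2, 1, 1, 3] i) = 4 ∧
    ¬ (∑ i, msQ σ ([0, 0] ++ [0, 2, 2, 1, 1, 3]) i)
        ≤ (∑ i, msQ σ [0, 0] i) + ∑ i, msQ σ [0, 2, 2, 1, 1, 3] i := by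
  have h1 : (∑ i, msQ σ [0, 0] i) = 2 := by
    rw [qShort]; decide
  have h2 : (∑ i, msQ σ [0, 2, 2, 1, 1, 3] i) = 0 := by
    rw [qMid]; decide
  have h3 : (∑ i, msQ σ [0, 0, 0, 2, 2, 1, 1, 3] i) = 4 := by
    rw [qLong]; decide
  have h4 : ([0, 0] ++ [0, 2, 2, 1, 1, 3] : List (Fin 4)) = [0, 0, 0, 2, 2, 1, 1, 3] := rfl
  exact ⟨h1, h2, h3, by rw [h4, h1, h2, h3]; omega⟩
end

section
/- In a connected non-bipartite graph, for any two non-adjacent vertices i and j there exists a finite word y over the vertex set of even total length |ij y| such that the FCFM matching of y alone is perfect and the FCFM matching of the word i j y is also perfect (y is an erasing word of ij). -/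
/-!
If `u ~ a`, `v ~ b` and `y` erases the pair `a b`, then `a b y` erases `u v`: under FCFM either
`u` and `v` match each other, leaving `a b y`, or `a` takes the oldest item `u` and `b` takes `v`,
leaving `y`. An edge `u v` is erased by the empty word, so working outward from the middle edge of
an odd walk from `i` to `j` produces an erasing word of `i j`. Such a walk exists because the graph
is connected and, not being bipartite, has an odd closed walk.
-/

variable {V : Type*} [Fintype V] [DecidableEq V]

theorem SimpleGraph.Connected.exists_odd_walk {α : Type*} {G : SimpleGraph α}
    (hconn : G.Connected) (hnb : ¬ G.Colorable 2) (u v : α) :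
    ∃ w : G.Walk u v, Odd w.length := by
  obtain ⟨r, c, hc⟩ : ∃ r, ∃ c : G.Walk r r, Odd c.length := by
    simpa [two_colorable_iff_forall_loop_even] using hnb
  obtain ⟨p⟩ := hconn u r
  obtain ⟨q⟩ := hconn r v
  rcases Nat.even_or_odd (p.length + q.length) with heven | hodd
  · exact ⟨p.append (c.append q), by simp only [Walk.length_append]; grind⟩
  · exact ⟨p.append q, by rwa [Walk.length_append]⟩

section Erasing

variable {α : Type*} {G : SimpleGraph α} [DecidableRel G.Adj]

theorem fcfmQ_append (xs ys : List α) :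
    fcfmQ G (xs ++ ys) = ys.foldl (fcfmStep G) (fcfmQ G xs) :=
  List.foldl_append

theorem fcfmQ_append_of_fcfmQ_eq_nil {xs : List α} (h : fcfmQ G xs = []) (ys : List α) :
    fcfmQ G (xs ++ ys) = fcfmQ G ys := by
  rw [fcfmQ_append, h, fcfmQ]

theorem fcfmQ_pair_eq_nil_of_adj {u v : α} (h : G.Adj u v) : fcfmQ G [u, v] = [] := by
  simp [fcfmQ, fcfmStep, h]

theorem fcfmQ_eq_nil_of_cross_adj {u v a b : α} (huv : ¬ G.Adj u v) (hua : G.Adj u a)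
    (hvb : G.Adj v b) :
    fcfmQ G [u, v, a, b] = [] := by
  simp [fcfmQ, fcfmStep, List.findIdx?_cons, huv, hua, hvb]

variable (G) in
def IsFcfmErasingWord (u v : α) (y : List α) : Prop :=
  Even (u :: v :: y).length ∧ fcfmQ G y = [] ∧ fcfmQ G (u :: v :: y) = []

theorem isFcfmErasingWord_nil_of_adj {u v : α} (h : G.Adj u v) : IsFcfmErasingWord G u v [] :=
  ⟨by simp, rfl, fcfmQ_pair_eq_nil_of_adj h⟩

theorem IsFcfmErasingWord.cons_cons {u v a b : α} {y : List α} (hua : G.Adj u a)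
    (hvb : G.Adj v b) (hy : IsFcfmErasingWord G a b y) :
    IsFcfmErasingWord G u v (a :: b :: y) := by
  obtain ⟨heven, hy, haby⟩ := hy
  refine ⟨by simpa [Nat.even_add_one] using heven, haby, ?_⟩
  by_cases huv : G.Adj u v
  · exact (fcfmQ_append_of_fcfmQ_eq_nil (fcfmQ_pair_eq_nil_of_adj huv) _).trans haby
  · exact (fcfmQ_append_of_fcfmQ_eq_nil (fcfmQ_eq_nil_of_cross_adj huv hua hvb) _).trans hy

theorem exists_isFcfmErasingWord_of_odd_walk {u v : α} (w : G.Walk u v) (hw : Odd w.length) :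
    ∃ y, IsFcfmErasingWord G u v y := by
  obtain ⟨m, hm⟩ := hw
  have outward : ∀ k ≤ m,
      ∃ y, IsFcfmErasingWord G (w.getVert (m - k)) (w.getVert (m + 1 + k)) y := by
    intro k hk
    induction k with
    | zero => exact ⟨[], isFcfmErasingWord_nil_of_adj (w.adj_getVert_succ (by omega))⟩
    | succ k ih =>
      obtain ⟨y, hy⟩ := ih (by omega)
      have hleft := w.adj_getVert_succ (i := m - (k + 1)) (by omega)
      have hright := w.adj_getVert_succ (i := m + 1 + k) (by omega)
      rw [show m - (k + 1) + 1 = m - k by omega] at hleft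
      exact ⟨_, hy.cons_cons hleft hright.symm⟩
  obtain ⟨y, hy⟩ := outward m le_rfl
  rw [Nat.sub_self, w.getVert_zero, show m + 1 + m = w.length by omega, w.getVert_length] at hy
  exact ⟨y, hy⟩

end Erasing

theorem exists_fcfm_erasing_word_general (G : SimpleGraph V) [DecidableRel G.Adj]
    (hconn : G.Connected) (hnb : ¬ G.Colorable 2)
    (i j : V) :
    ∃ y : List V, Even (([i, j] ++ y).length) ∧
      fcfmQ G y = [] ∧ fcfmQ G ([i, j] ++ y) = [] := by
  obtain ⟨w, hw⟩ := hconn.exists_odd_walk hnb i j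
  exact exists_isFcfmErasingWord_of_odd_walk w hw

/-- In a connected non-bipartite graph, any two non-adjacent classes `i`, `j` admit an
erasing word `y` for FCFM: the total word `i j y` has even length, `y` alone is
perfectly matched by FCFM, and `i j y` is perfectly matched by FCFM. -/
theorem exists_fcfm_erasing_word (G : SimpleGraph V) [DecidableRel G.Adj]
    (hconn : G.Connected) (hnb : ¬ G.Colorable 2)
    (i j : V) (hij : ¬ G.Adj i j) :
    ∃ y : List V, Even (([i, j] ++ y).length) ∧
      fcfmQ G y = [] ∧ fcfmQ G ([i, j] ++ y) = [] :=
  exists_fcfm_erasing_word_general G hconn hnb i j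
end

section
/- Let φ be a sub-additive admissible matching policy on a connected non-bipartite graph G. Then every admissible buffer word u of even length (a word over V of even length in which no two letters are adjacent in G) admits an erasing word: a word z of even length such that Q_φ(z) = ∅ and Q_φ(uz) = ∅ (for all compatible preference draws). -/
variable {V : Type*} [Fintype V] [DecidableEq V]

section ErasingAux

open List

variable {G : SimpleGraph V} (step : List V → V → List V)

/-- admissible lists: no two members adjacent -/
private def Adm (G : SimpleGraph V) (w : List V) : Prop :=
  ∀ a ∈ w, ∀ b ∈ w, ¬ G.Adj a b

private lemma step_len (hm : ∀ (w : List V) (v : V), (∃ u ∈ w, G.Adj u v) →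
      ∃ k : Fin w.length, G.Adj (w.get k) v ∧ step w v = w.eraseIdx k)
    (hn : ∀ (w : List V) (v : V), (¬ ∃ u ∈ w, G.Adj u v) → step w v = w ++ [v]) (w : List V) (v : V) :
    (step w v).length % 2 = (w.length + 1) % 2 := by
  by_cases h : ∃ u ∈ w, G.Adj u v
  · obtain ⟨k, -, he⟩ := hm w v h
    have hk := k.isLt
    rw [he]
    have := List.length_eraseIdx_add_one hk
    omega
  · rw [hn w v h]; simp

private lemma foldl_parity (hm : ∀ (w : List V) (v : V), (∃ u ∈ w, G.Adj u v) →
      ∃ k : Fin w.length, G.Adj (w.get k) v ∧ step w v = w.eraseIdx k)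
    (hn : ∀ (w : List V) (v : V), (¬ ∃ u ∈ w, G.Adj u v) → step w v = w ++ [v]) (z : List V) : ∀ w : List V,
    (z.foldl step w).length % 2 = (w.length + z.length) % 2 := by
  induction z with
  | nil => intro w; simp
  | cons v z ih =>
    intro w
    have h1 := step_len step hm hn w v
    have h2 := ih (step w v)
    simp only [List.foldl_cons, List.length_cons]
    omega

private lemma adm_step (hm : ∀ (w : List V) (v : V), (∃ u ∈ w, G.Adj u v) →
      ∃ k : Fin w.length, G.Adj (w.get k) v ∧ step w v = w.eraseIdx k)
    (hn : ∀ (w : List V) (v : V), (¬ ∃ u ∈ w, G.Adj u v) → step w v = w ++ [v]) {w : List V} (hw : Adm G w) (v : V) : Adm G (step w v) := by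
  by_cases h : ∃ u ∈ w, G.Adj u v
  · obtain ⟨k, -, he⟩ := hm w v h
    rw [he]
    intro a ha b hb
    exact hw a ((w.eraseIdx_sublist k).subset ha) b ((w.eraseIdx_sublist k).subset hb)
  · rw [hn w v h]
    intro a ha b hb
    push_neg at h
    rcases List.mem_append.1 ha with ha' | ha' <;>
      rcases List.mem_append.1 hb with hb' | hb'
    · exact hw a ha' b hb'
    · have hb2 : b = v := by simpa using hb'
      subst hb2; exact h a ha'
    · have ha2 : a = v := by simpa using ha'
      subst ha2; intro hadj; exact h b hb' hadj.symm
    · have ha2 : a = v := by simpa using ha'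
      have hb2 : b = v := by simpa using hb'
      subst ha2; subst hb2; exact G.irrefl

private lemma adm_foldl (hm : ∀ (w : List V) (v : V), (∃ u ∈ w, G.Adj u v) →
      ∃ k : Fin w.length, G.Adj (w.get k) v ∧ step w v = w.eraseIdx k)
    (hn : ∀ (w : List V) (v : V), (¬ ∃ u ∈ w, G.Adj u v) → step w v = w ++ [v]) (z : List V) : ∀ w : List V, Adm G w → Adm G (z.foldl step w) := by
  induction z with
  | nil => intro w hw; simpa using hw
  | cons v z ih => intro w hw; exact ih _ (adm_step step hm hn hw v)

/-- an admissible word just accumulates -/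
private lemma foldl_self (hn : ∀ (w : List V) (v : V), (¬ ∃ u ∈ w, G.Adj u v) → step w v = w ++ [v]) (w : List V) : ∀ acc : List V, Adm G (acc ++ w) →
    w.foldl step acc = acc ++ w := by
  induction w with
  | nil => intro acc _; simp
  | cons a w ih =>
    intro acc hadm
    have hstep : step acc a = acc ++ [a] := by
      apply hn
      rintro ⟨u, hu, hadj⟩
      exact hadm u (by simp [hu]) a (by simp) hadj
    have hadm' : Adm G ((acc ++ [a]) ++ w) := by
      simpa [List.append_assoc] using hadm
    simp only [List.foldl_cons, hstep, ih _ hadm', List.append_assoc, List.cons_append,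
      List.nil_append]

private lemma step_nil (hn : ∀ (w : List V) (v : V), (¬ ∃ u ∈ w, G.Adj u v) → step w v = w ++ [v]) (v : V) : step [] v = [v] := by
  rw [hn [] v (by simp)]; rfl

private lemma step_single_adj (hm : ∀ (w : List V) (v : V), (∃ u ∈ w, G.Adj u v) →
      ∃ k : Fin w.length, G.Adj (w.get k) v ∧ step w v = w.eraseIdx k)
    {x v : V} (h : G.Adj x v) : step [x] v = [] := by
  obtain ⟨k, -, he⟩ := hm [x] v ⟨x, by simp, h⟩
  have hlt : (k : ℕ) < 1 := by simpa using k.isLt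
  have h0 : (k : ℕ) = 0 := by omega
  rw [he, h0]
  rfl

private lemma step_single_nadj (hn : ∀ (w : List V) (v : V), (¬ ∃ u ∈ w, G.Adj u v) → step w v = w ++ [v])
    {x v : V} (h : ¬ G.Adj x v) : step [x] v = [x, v] := by
  rw [hn [x] v (by simpa using h)]; rfl

/-- effect of an arriving matched item on a two-element buffer -/
private lemma step_pair (hm : ∀ (w : List V) (v : V), (∃ u ∈ w, G.Adj u v) →
      ∃ k : Fin w.length, G.Adj (w.get k) v ∧ step w v = w.eraseIdx k)
    {a b v : V} (h : G.Adj a v ∨ G.Adj b v) :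
    (G.Adj a v ∧ step [a, b] v = [b]) ∨ (G.Adj b v ∧ step [a, b] v = [a]) := by
  have hex : ∃ u ∈ [a, b], G.Adj u v := by
    rcases h with h | h
    · exact ⟨a, by simp, h⟩
    · exact ⟨b, by simp, h⟩
  obtain ⟨k, hk, he⟩ := hm [a, b] v hex
  have hlt : (k : ℕ) < 2 := by simpa using k.isLt
  rcases (by omega : (k : ℕ) = 0 ∨ (k : ℕ) = 1) with h0 | h1
  · left
    rw [h0] at he
    exact ⟨by simpa [h0, List.get] using hk, by rw [he]; rfl⟩
  · right
    rw [h1] at he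
    exact ⟨by simpa [h1, List.get] using hk, by rw [he]; rfl⟩

/-- decompose a walk from the back -/
private lemma back_decomp {x y : V} (w : G.Walk x y) (n : ℕ) (h : w.length = n + 1) :
    ∃ d, ∃ _ : G.Adj d y, ∃ q : G.Walk x d, q.length = n := by
  have hr : w.reverse.length = n + 1 := by simpa using h
  cases hrev : w.reverse with
  | nil => rw [hrev] at hr; simp at hr
  | cons e q =>
    rw [hrev] at hr
    simp only [SimpleGraph.Walk.length_cons, Nat.add_right_cancel_iff] at hr
    exact ⟨_, e.symm, q.reverse, by simpa using hr⟩

/-- The key pair-erasing lemma, by strong induction on the length of an odd walk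
between the two (non-adjacent) letters of the buffer. -/
private lemma killpair (hm : ∀ (w : List V) (v : V), (∃ u ∈ w, G.Adj u v) →
      ∃ k : Fin w.length, G.Adj (w.get k) v ∧ step w v = w.eraseIdx k)
    (hn : ∀ (w : List V) (v : V), (¬ ∃ u ∈ w, G.Adj u v) → step w v = w ++ [v]) :
    ∀ (n : ℕ) (a b : V) (p : G.Walk a b), p.length = n → Odd n → ¬ G.Adj a b →
      ∃ z : List V, z.foldl step [] = [] ∧ z.foldl step [a, b] = [] := by
  intro n
  induction n using Nat.strong_induction_on with
  | _ n IH =>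
  intro a b p hlen hodd hnadj
  cases p with
  | nil =>
    rw [← hlen] at hodd
    simp [Nat.odd_iff] at hodd
  | @cons _ w1 _ h₁ p₁ =>
  cases p₁ with
  | nil => exact absurd h₁ hnadj
  | @cons _ w2 _ h₂ p₂ =>
  have hlen2 : p₂.length + 2 = n := by
    simpa [Nat.add_assoc] using hlen
  have hodd2 : Odd p₂.length := by
    rw [Nat.odd_iff] at hodd ⊢; omega
  have hpos : 1 ≤ p₂.length := hodd2.pos
  obtain ⟨m2, hm2⟩ : ∃ m2, p₂.length = m2 + 1 := ⟨p₂.length - 1, by omega⟩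
  obtain ⟨c, e_cb, q, hq⟩ := back_decomp p₂ m2 hm2
  by_cases hca : G.Adj c a
  · -- CASE 1: play w1 then w2
    rcases step_pair step hm (a := a) (b := b) (Or.inl h₁) with ⟨-, he⟩ | ⟨-, he⟩
    · -- a was matched; remaining buffer [b]
      by_cases hbw2 : G.Adj b w2
      · refine ⟨[w1, w2], ?_, ?_⟩
        · simp [List.foldl_cons, step_nil step hn, step_single_adj step hm h₂]
        · simp [List.foldl_cons, he, step_single_adj step hm hbw2]
      · obtain ⟨z', hz1, hz2⟩ := IH p₂.length (by omega) b w2 p₂.reverse (by simp)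
          hodd2 hbw2
        refine ⟨w1 :: w2 :: z', ?_, ?_⟩
        · simpa [List.foldl_cons, step_nil step hn, step_single_adj step hm h₂] using hz1
        · simpa [List.foldl_cons, he, step_single_nadj step hn hbw2] using hz2
    · -- b was matched; remaining buffer [a]
      by_cases haw2 : G.Adj a w2
      · refine ⟨[w1, w2], ?_, ?_⟩
        · simp [List.foldl_cons, step_nil step hn, step_single_adj step hm h₂]
        · simp [List.foldl_cons, he, step_single_adj step hm haw2]
      · -- odd walk a → w2 of length p₂.length via (q.concat hca).reverse
        obtain ⟨z', hz1, hz2⟩ := IH p₂.length (by omega) a w2 (q.concat hca).reverse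
          (by rw [SimpleGraph.Walk.length_reverse, SimpleGraph.Walk.length_concat, hq]; omega)
          hodd2 haw2
        refine ⟨w1 :: w2 :: z', ?_, ?_⟩
        · simpa [List.foldl_cons, step_nil step hn, step_single_adj step hm h₂] using hz1
        · simpa [List.foldl_cons, he, step_single_nadj step hn haw2] using hz2
  · -- CASE 2: play c (it must match b), then walk backwards
    have he : step [a, b] c = [a] := by
      rcases step_pair step hm (a := a) (b := b) (Or.inr e_cb.symm) with ⟨hav, -⟩ | ⟨-, he⟩
      · exact absurd hav.symm hca
      · exact he
    cases q with
    | nil =>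
      -- c = w2 : play w1 next and win
      refine ⟨[w2, w1], ?_, ?_⟩
      · simp [List.foldl_cons, step_nil step hn, step_single_adj step hm h₂.symm]
      · simp [List.foldl_cons, he, step_single_adj step hm h₁]
    | @cons _ d _ e3 q3 =>
      obtain ⟨c₂, e₂, q', hq'⟩ := back_decomp (SimpleGraph.Walk.cons e3 q3) q3.length (by simp)
      by_cases hac₂ : G.Adj a c₂
      · refine ⟨[c, c₂], ?_, ?_⟩
        · simp [List.foldl_cons, step_nil step hn, step_single_adj step hm e₂.symm]
        · simp [List.foldl_cons, he, step_single_adj step hm hac₂]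
      · have hq3 : q3.length + 2 + 2 = n := by
          have : (SimpleGraph.Walk.cons e3 q3).length = m2 := hq
          simp only [SimpleGraph.Walk.length_cons] at this
          omega
        have hlen' : (SimpleGraph.Walk.cons h₁ (SimpleGraph.Walk.cons h₂ q')).length
            = q3.length + 2 := by simp [hq', Nat.add_assoc]
        have hodd' : Odd (q3.length + 2) := by
          rw [Nat.odd_iff] at hodd ⊢; omega
        obtain ⟨z', hz1, hz2⟩ := IH (q3.length + 2) (by omega) a c₂
          (SimpleGraph.Walk.cons h₁ (SimpleGraph.Walk.cons h₂ q')) hlen' hodd' hac₂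
        refine ⟨c :: c₂ :: z', ?_, ?_⟩
        · simpa [List.foldl_cons, step_nil step hn, step_single_adj step hm e₂.symm] using hz1
        · simpa [List.foldl_cons, he, step_single_nadj step hn hac₂] using hz2

/-- odd walks exist between all pairs of vertices -/
private lemma exists_odd_walk (hconn : G.Connected) (hnb : ¬ G.Colorable 2) (a b : V) :
    ∃ p : G.Walk a b, Odd p.length := by
  have hocw : ∃ x, ∃ c : G.Walk x x, Odd c.length := by
    by_contra hall
    push_neg at hall
    apply hnb
    obtain ⟨r⟩ := hconn.nonempty
    have getw : ∀ x : V, G.Walk r x := fun x =>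
      Classical.choice (show Nonempty (G.Walk r x) from hconn.preconnected r x)
    refine ⟨SimpleGraph.Coloring.mk
      (fun x => if Even (getw x).length then (0 : Fin 2) else 1) ?_⟩
    intro x y hxy hcol
    have hpar : ((getw x).length + (getw y).length) % 2 = 0 := by
      by_cases hx : Even (getw x).length <;> by_cases hy : Even (getw y).length
      · rw [Nat.even_iff] at hx hy; omega
      · simp [hx, hy] at hcol
      · simp [hx, hy] at hcol
      · rw [Nat.not_even_iff] at hx hy; omega
    have hno := hall r ((getw x).append (SimpleGraph.Walk.cons hxy (getw y).reverse))
    apply hno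
    rw [Nat.odd_iff, SimpleGraph.Walk.length_append, SimpleGraph.Walk.length_cons,
      SimpleGraph.Walk.length_reverse]
    omega
  obtain ⟨x, c, hc⟩ := hocw
  obtain ⟨p1⟩ := hconn.preconnected a x
  obtain ⟨p2⟩ := hconn.preconnected x b
  by_cases h : Odd (p1.length + p2.length)
  · refine ⟨p1.append p2, ?_⟩
    rw [SimpleGraph.Walk.length_append]
    exact h
  · refine ⟨p1.append (c.append p2), ?_⟩
    rw [SimpleGraph.Walk.length_append, SimpleGraph.Walk.length_append]
    rw [Nat.odd_iff] at hc ⊢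
    rw [Nat.not_odd_iff] at h
    omega

/-- Main auxiliary induction: every even admissible buffer can be erased. -/
private lemma erase_all (hm : ∀ (w : List V) (v : V), (∃ u ∈ w, G.Adj u v) →
      ∃ k : Fin w.length, G.Adj (w.get k) v ∧ step w v = w.eraseIdx k)
    (hn : ∀ (w : List V) (v : V), (¬ ∃ u ∈ w, G.Adj u v) → step w v = w ++ [v]) (hconn : G.Connected) (hnb : ¬ G.Colorable 2)
    (hsub : ∀ z' z'' : List V, ((z' ++ z'').foldl step []).length ≤
      (z'.foldl step []).length + (z''.foldl step []).length) :
    ∀ (n : ℕ) (w : List V), w.length = n → n % 2 = 0 → Adm G w →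
      ∃ z : List V, z.foldl step [] = [] ∧ z.foldl step w = [] := by
  intro n
  induction n using Nat.strong_induction_on with
  | _ n IH =>
  intro w hlen hpar hadm
  cases hwr : w.reverse with
  | nil =>
    have hw0 : w = [] := by
      have := congrArg List.reverse hwr
      simpa using this
    exact ⟨[], by simp, by simp [hw0]⟩
  | cons d rest =>
  cases rest with
  | nil =>
    exfalso
    have hw1 : w = [d] := by
      have := congrArg List.reverse hwr
      simpa using this
    rw [hw1] at hlen
    simp at hlen
    omega
  | cons c tr =>
    have hw : w = tr.reverse ++ [c, d] := by
      have := congrArg List.reverse hwr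
      simpa [List.append_assoc] using this
    have hcw : c ∈ w := by rw [hw]; simp
    have hdw : d ∈ w := by rw [hw]; simp
    have hcd : ¬ G.Adj c d := hadm c hcw d hdw
    obtain ⟨p, hp⟩ := exists_odd_walk hconn hnb c d
    obtain ⟨z₂, hz₂1, hz₂2⟩ := killpair step hm hn p.length c d p rfl hp hcd
    have hlenw : n = tr.reverse.length + 2 := by
      rw [← hlen, hw]; simp
    have hadm_t : Adm G tr.reverse := by
      intro x hx y hy
      exact hadm x (by rw [hw]; exact List.mem_append.2 (Or.inl hx))
        y (by rw [hw]; exact List.mem_append.2 (Or.inl hy))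
    have hadm_cd : Adm G [c, d] := by
      intro x hx y hy
      have hx' : x ∈ w := by
        rw [hw]; exact List.mem_append.2 (Or.inr hx)
      have hy' : y ∈ w := by
        rw [hw]; exact List.mem_append.2 (Or.inr hy)
      exact hadm x hx' y hy'
    have hQw : w.foldl step [] = w := by
      have := foldl_self step hn w [] (by simpa using hadm)
      simpa using this
    have hQt : tr.reverse.foldl step [] = tr.reverse := by
      have := foldl_self step hn tr.reverse [] (by simpa using hadm_t)
      simpa using this
    have hQcd : [c, d].foldl step [] = [c, d] := by
      have := foldl_self step hn [c, d] [] (by simpa using hadm_cd)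
      simpa using this
    have key := hsub tr.reverse ([c, d] ++ z₂)
    have e1 : tr.reverse ++ ([c, d] ++ z₂) = w ++ z₂ := by
      rw [hw, List.append_assoc]
    rw [e1, List.foldl_append, hQw, List.foldl_append, hQcd, hz₂2, hQt] at key
    simp only [List.length_nil, Nat.add_zero] at key
    -- key : (z₂.foldl step w).length ≤ tr.reverse.length
    have hz₂par : z₂.length % 2 = 0 := by
      have := foldl_parity step hm hn z₂ []
      rw [hz₂1] at this
      simpa using this.symm
    have hw'par : (z₂.foldl step w).length % 2 = 0 := by
      have := foldl_parity step hm hn z₂ w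
      omega
    have hw'lt : (z₂.foldl step w).length < n := by omega
    have hadm' : Adm G (z₂.foldl step w) := adm_foldl step hm hn z₂ w hadm
    obtain ⟨z₃, hz₃1, hz₃2⟩ := IH (z₂.foldl step w).length hw'lt (z₂.foldl step w)
      rfl hw'par hadm'
    refine ⟨z₂ ++ z₃, ?_, ?_⟩
    · rw [List.foldl_append, hz₂1, hz₃1]
    · rw [List.foldl_append]
      exact hz₃2

end ErasingAux

/-- For a sub-additive admissible matching policy (modelled by its buffer update map
`step`) on a connected non-bipartite graph, every admissible buffer word `u` of even
length admits an erasing word `z`: `z` has even length, is perfectly matched by the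
policy from an empty system, and empties the buffer `u`. -/
theorem exists_erasing_word {G : SimpleGraph V}
    (hconn : G.Connected) (hnb : ¬ G.Colorable 2)
    (step : List V → V → List V)
    -- admissibility of the policy: an arriving item is matched with some compatible
    -- item of the buffer if one exists, and joins the buffer otherwise
    (hmatch : ∀ (w : List V) (v : V), (∃ u ∈ w, G.Adj u v) →
      ∃ k : Fin w.length, G.Adj (w.get k) v ∧ step w v = w.eraseIdx k)
    (hnomatch : ∀ (w : List V) (v : V), (¬ ∃ u ∈ w, G.Adj u v) → step w v = w ++ [v])
    -- sub-additivity of the policy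
    (hsub : ∀ z' z'' : List V, ((z' ++ z'').foldl step []).length ≤
      (z'.foldl step []).length + (z''.foldl step []).length)
    (u : List V) (hu : Even u.length)
    (huW : ∀ a ∈ u, ∀ b ∈ u, ¬ G.Adj a b) :
    ∃ z : List V, Even z.length ∧ z.foldl step [] = [] ∧ (u ++ z).foldl step [] = [] := by
  have hadm : Adm G u := huW
  obtain ⟨z, hz1, hz2⟩ := erase_all step hmatch hnomatch hconn hnb hsub u.length u rfl
    (by rwa [Nat.even_iff] at hu) hadm
  refine ⟨z, ?_, hz1, ?_⟩
  · have := foldl_parity step hmatch hnomatch z []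
    rw [hz1] at this
    rw [Nat.even_iff]
    simpa using this.symm
  · rw [List.foldl_append]
    have hQu : u.foldl step [] = u := by
      have := foldl_self step hnomatch u [] (by simpa using hadm)
      simpa using this
    rw [hQu]
    exact hz2
end

section
/- If φ is a sub-additive matching policy and z is a strong erasing word for (G, φ), then for every admissible even-length buffer word u with |u| ≥ 2, processing z after u strictly decreases the queue: |Q_φ(uz)| ≤ |Q_φ(u)| − 2 = |u| − 2. -/
variable {V : Type*} [Fintype V] [DecidableEq V]

/-- If `φ` (modelled by its buffer update map `step`) is sub-additive and `z` is a
strong erasing word for `(G, φ)`, then appending `z` to any admissible even buffer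
word `u` (of length at least 2) strictly decreases the queue:
`|Q_φ(uz)| ≤ |Q_φ(u)| − 2 = |u| − 2`. -/
theorem strong_erasing_decreases {G : SimpleGraph V}
    (step : List V → V → List V)
    (hmatch : ∀ (w : List V) (v : V), (∃ u ∈ w, G.Adj u v) →
      ∃ k : Fin w.length, G.Adj (w.get k) v ∧ step w v = w.eraseIdx k)
    (hnomatch : ∀ (w : List V) (v : V), (¬ ∃ u ∈ w, G.Adj u v) → step w v = w ++ [v])
    (hsub : ∀ z' z'' : List V, ((z' ++ z'').foldl step []).length ≤
      (z'.foldl step []).length + (z''.foldl step []).length)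
    -- `z` is a strong erasing word for `(G, φ)`
    (z : List V) (hz : Even z.length)
    (hz1 : ∀ i j : V, ¬ G.Adj i j → (i :: j :: z).foldl step [] = [])
    (hz2 : ∀ k : ℕ, Even k → (z.drop k).foldl step [] = [])
    -- `u` is an admissible buffer word of even length at least 2
    (u : List V) (hu : Even u.length) (hu2 : 2 ≤ u.length)
    (huW : ∀ a ∈ u, ∀ b ∈ u, ¬ G.Adj a b) :
    ((u ++ z).foldl step []).length ≤ (u.foldl step []).length - 2 ∧
      (u.foldl step []).length = u.length := by
  have key : ∀ w : List V, (∀ a ∈ w, ∀ b ∈ w, ¬ G.Adj a b) → w.foldl step [] = w := by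
    intro w
    induction w using List.reverseRecOn with
    | nil => intro _; rfl
    | append_singleton t v ih =>
      intro hW
      have ht : t.foldl step [] = t := by
        apply ih
        intro a ha b hb
        exact hW a (by simp [ha]) b (by simp [hb])
      rw [List.foldl_append, ht, List.foldl_cons, List.foldl_nil]
      apply hnomatch
      rintro ⟨x, hx, hadj⟩
      exact hW x (by simp [hx]) v (by simp) hadj
  have hQu : u.foldl step [] = u := key u huW
  refine ⟨?_, by rw [hQu]⟩
  -- split off the last two letters of u
  obtain ⟨t1, j, rfl⟩ : ∃ t1 j, u = t1 ++ [j] := by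
    rcases u.eq_nil_or_concat with h | ⟨t1, j, h⟩
    · simp [h] at hu2
    · exact ⟨t1, j, by simpa using h⟩
  obtain ⟨t, i, rfl⟩ : ∃ t i, t1 = t ++ [i] := by
    rcases t1.eq_nil_or_concat with h | ⟨t, i, h⟩
    · simp [h] at hu2
    · exact ⟨t, i, by simpa using h⟩
  have hiu : i ∈ t ++ [i] ++ [j] := by simp
  have hju : j ∈ t ++ [i] ++ [j] := by simp
  have hij : ¬ G.Adj i j := huW i hiu j hju
  have hz0 : (i :: j :: z).foldl step [] = [] := hz1 i j hij
  have hQt : t.foldl step [] = t := by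
    apply key
    intro a ha b hb
    exact huW a (by simp [ha]) b (by simp [hb])
  have hrw : t ++ [i] ++ [j] ++ z = t ++ (i :: j :: z) := by
    simp
  calc ((t ++ [i] ++ [j] ++ z).foldl step []).length
      = ((t ++ (i :: j :: z)).foldl step []).length := by rw [hrw]
    _ ≤ (t.foldl step []).length + ((i :: j :: z).foldl step []).length := hsub _ _
    _ = t.length := by rw [hQt, hz0]; simp
    _ = ((t ++ [i] ++ [j]).foldl step []).length - 2 := by
        rw [hQu]; simp
end

section
/- If G is a non-bipartite separable graph (partitioned into maximal independent sets I_1, ..., I_p with p ≥ 3 such that any two vertices from different parts are adjacent), then the word z consisting of two letters from each I_k in order (with the last two letters from distinct parts) is a strong erasing word for (G, φ) for every admissible matching policy φ. -/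
variable {V : Type*} [Fintype V] [DecidableEq V]

theorem erasing_master (G : SimpleGraph V) [DecidableRel G.Adj]
    (p : ℕ) (I : Fin p → Finset V)
    (hpart : ∀ v : V, ∃! k : Fin p, v ∈ I k)
    (hind : ∀ k : Fin p, ∀ a ∈ I k, ∀ b ∈ I k, ¬ G.Adj a b)
    (hcross : ∀ k l : Fin p, k ≠ l → ∀ a ∈ I k, ∀ b ∈ I l, G.Adj a b)
    (step : List V → V → List V)
    (hmatch : ∀ (w : List V) (v : V), (∃ u ∈ w, G.Adj u v) →
      ∃ k : Fin w.length, G.Adj (w.get k) v ∧ step w v = w.eraseIdx k)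
    (hnomatch : ∀ (w : List V) (v : V), (¬ ∃ u ∈ w, G.Adj u v) → step w v = w ++ [v]) :
    ∀ (r w : List V),
    (w = [] ∨ ∃ l, (∀ x ∈ w, x ∈ I l) ∧
        w.length + 2 * r.countP (fun v => decide (v ∈ I l)) ≤ r.length) →
    (∀ m, r.countP (fun v => decide (v ∈ I m)) ≤ 2) →
    Even (w.length + r.length) →
    (2 ≤ r.length → ∃ w' a b, r = w' ++ [a, b] ∧ ∀ k : Fin p, a ∈ I k → b ∉ I k) →
    r.foldl step w = [] := by
  intro r
  induction r with
  | nil =>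
    intro w hmono _ _ _
    rcases hmono with h | ⟨l, _, hle⟩
    · simpa using h
    · simp only [List.countP_nil, List.length_nil] at hle
      have : w.length = 0 := by omega
      simpa using List.length_eq_zero_iff.mp this
  | cons v r' ih =>
    intro w hmono hc hpar hv
    obtain ⟨m, hvm, -⟩ := hpart v
    -- tail: last-two property
    have hv' : 2 ≤ r'.length → ∃ w' a b, r' = w' ++ [a, b] ∧ ∀ k : Fin p, a ∈ I k → b ∉ I k := by
      intro h2
      obtain ⟨w', a, b, heq, hab⟩ := hv (by simp only [List.length_cons]; omega)
      match w' with
      | [] =>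
        exfalso
        simp only [List.nil_append, List.cons.injEq] at heq
        obtain ⟨-, rfl⟩ := heq
        simp at h2
      | c :: w'' =>
        simp only [List.cons_append, List.cons.injEq] at heq
        exact ⟨w'', a, b, heq.2, hab⟩
    -- tail: counts
    have hc' : ∀ m', r'.countP (fun v => decide (v ∈ I m')) ≤ 2 := by
      intro m'
      have := hc m'
      rw [List.countP_cons] at this
      omega
    have hcntm : (v :: r').countP (fun x => decide (x ∈ I m)) =
        r'.countP (fun x => decide (x ∈ I m)) + 1 := by
      rw [List.countP_cons]; simp [hvm]
    have hcm' : r'.countP (fun x => decide (x ∈ I m)) ≤ 1 := by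
      have := hc m; rw [hcntm] at this; omega
    rw [List.foldl_cons]
    by_cases hw : w = []
    · -- empty queue: append v
      subst hw
      have hstep : step [] v = [v] := by
        apply hnomatch; rintro ⟨u, hu, -⟩; simp at hu
      rw [hstep]
      have hr'odd : r'.length % 2 = 1 := by
        simp only [List.length_nil, List.length_cons, Nat.zero_add] at hpar
        rw [Nat.even_iff] at hpar
        omega
      apply ih [v]
      · refine Or.inr ⟨m, by simpa using hvm, ?_⟩
        simp only [List.length_singleton]
        rcases Nat.lt_or_ge r'.length 3 with hlt | hge
        · have h1 : r'.length = 1 := by omega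
          rcases List.length_eq_one_iff.mp h1 with ⟨u, rfl⟩
          have hu0 : u ∉ I m := by
            obtain ⟨w', a, b, heq, hab⟩ := hv (by simp)
            have hw' : w' = [] := by
              have := congrArg List.length heq
              simp only [List.length_cons, List.length_append, List.length_singleton,
                List.length_nil] at this
              exact List.length_eq_zero_iff.mp (by omega)
            subst hw'
            simp only [List.nil_append, List.cons.injEq] at heq
            obtain ⟨rfl, rfl, -⟩ := heq
            exact hab m hvm
          simp [hu0]
        · omega
      · exact hc'
      · simp only [List.length_singleton]
        rw [Nat.even_iff]; omega
      · exact hv'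
    · -- nonempty queue, monochromatic of part l
      rcases hmono with h | ⟨l, hall, hle⟩
      · exact absurd h hw
      by_cases hvl : v ∈ I l
      · -- v same part: append
        have hstep : step w v = w ++ [v] := by
          apply hnomatch
          rintro ⟨u, hu, hadj⟩
          exact hind l u (hall u hu) v hvl hadj
        rw [hstep]
        have hcnt : (v :: r').countP (fun x => decide (x ∈ I l)) =
            r'.countP (fun x => decide (x ∈ I l)) + 1 := by
          rw [List.countP_cons]; simp [hvl]
        apply ih (w ++ [v])
        · refine Or.inr ⟨l, ?_, ?_⟩
          · intro x hx
            rcases List.mem_append.mp hx with h | h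
            · exact hall x h
            · simp only [List.mem_singleton] at h; subst h; exact hvl
          · rw [hcnt] at hle
            simp only [List.length_cons] at hle
            simp only [List.length_append, List.length_singleton, List.length_nil,
              List.length_cons]
            omega
        · exact hc'
        · simp only [List.length_append, List.length_singleton, List.length_nil,
            List.length_cons] at hpar ⊢
          rw [Nat.even_iff] at hpar ⊢
          omega
        · exact hv'
      · -- v other part: match, erase one element
        have hml : m ≠ l := fun h => hvl (h ▸ hvm)
        obtain ⟨u, hu⟩ := List.exists_mem_of_ne_nil w hw
        have hadj : G.Adj u v := hcross l m (Ne.symm hml) u (hall u hu) v hvm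
        obtain ⟨k, -, hstep⟩ := hmatch w v ⟨u, hu, hadj⟩
        rw [hstep]
        have hlen' : (w.eraseIdx k).length = w.length - 1 :=
          List.length_eraseIdx_of_lt k.isLt
        have hwpos : 1 ≤ w.length := List.length_pos_iff.mpr hw
        have hcnt : (v :: r').countP (fun x => decide (x ∈ I l)) =
            r'.countP (fun x => decide (x ∈ I l)) := by
          rw [List.countP_cons]; simp [hvl]
        apply ih (w.eraseIdx k)
        · refine Or.inr ⟨l, ?_, ?_⟩
          · intro x hx
            exact hall x (List.mem_of_mem_eraseIdx hx)
          · rw [hcnt] at hle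
            simp only [List.length_cons] at hle
            rw [hlen']
            omega
        · exact hc'
        · rw [hlen']
          simp only [List.length_cons] at hpar
          rw [Nat.even_iff] at hpar ⊢
          omega
        · exact hv'


/-- In a non-bipartite separable graph (partition into `p ≥ 3` maximal independent
sets, any two vertices of distinct parts adjacent), any word `z` of length `2p`
containing exactly two letters of each part and whose last two letters come from
distinct parts is a strong erasing word for `(G, φ)`, for every admissible policy `φ`:
`Q_φ(ijz) = ∅` for all non-adjacent `i, j`, and every even-length right sub-word of
`z` is completely matchable. -/
theorem separable_strong_erasing_word (G : SimpleGraph V) [DecidableRel G.Adj]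
    (p : ℕ) (hp : 3 ≤ p) (I : Fin p → Finset V)
    (hpart : ∀ v : V, ∃! k : Fin p, v ∈ I k)
    (hind : ∀ k : Fin p, ∀ a ∈ I k, ∀ b ∈ I k, ¬ G.Adj a b)
    (hcross : ∀ k l : Fin p, k ≠ l → ∀ a ∈ I k, ∀ b ∈ I l, G.Adj a b)
    (z : List V) (hlen : z.length = 2 * p)
    (hcount : ∀ k : Fin p, z.countP (fun v => decide (v ∈ I k)) = 2)
    (hlast : ∃ (w : List V) (a b : V), z = w ++ [a, b] ∧ ∀ k : Fin p, a ∈ I k → b ∉ I k)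
    (step : List V → V → List V)
    (hmatch : ∀ (w : List V) (v : V), (∃ u ∈ w, G.Adj u v) →
      ∃ k : Fin w.length, G.Adj (w.get k) v ∧ step w v = w.eraseIdx k)
    (hnomatch : ∀ (w : List V) (v : V), (¬ ∃ u ∈ w, G.Adj u v) → step w v = w ++ [v]) :
    (∀ i j : V, ¬ G.Adj i j → (i :: j :: z).foldl step [] = []) ∧
      ∀ k : ℕ, Even k → (z.drop k).foldl step [] = [] := by
  have master := erasing_master G p I hpart hind hcross step hmatch hnomatch
  have hzlast : 2 ≤ z.length → ∃ w' a b, z = w' ++ [a, b] ∧ ∀ k : Fin p, a ∈ I k → b ∉ I k := by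
    intro _
    obtain ⟨w0, a, b, hz, hab⟩ := hlast
    exact ⟨w0, a, b, hz, hab⟩
  constructor
  · intro i j hij
    obtain ⟨ki, hki, -⟩ := hpart i
    obtain ⟨kj, hkj, -⟩ := hpart j
    have hkk : ki = kj := by
      by_contra h
      exact hij (hcross ki kj h i hki j hkj)
    subst hkk
    have h1 : step [] i = [i] := by
      apply hnomatch; rintro ⟨u, hu, -⟩; simp at hu
    have h2 : step [i] j = [i, j] := by
      apply hnomatch
      rintro ⟨u, hu, hadj⟩
      simp only [List.mem_singleton] at hu
      subst hu
      exact hij hadj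
    simp only [List.foldl_cons, h1, h2]
    apply master z [i, j]
    · refine Or.inr ⟨ki, ?_, ?_⟩
      · intro x hx
        rcases List.mem_cons.mp hx with rfl | hx
        · exact hki
        · simp only [List.mem_singleton] at hx; subst hx; exact hkj
      · rw [hcount ki, hlen]
        simp only [List.length_cons, List.length_nil]
        omega
    · intro m; rw [hcount m]
    · rw [hlen]
      simp only [List.length_cons, List.length_nil]
      exact ⟨p + 1, by ring⟩
    · exact hzlast
  · intro k hk
    rcases Nat.lt_or_ge k (2 * p) with hlt | hge
    · have hk2 : k % 2 = 0 := Nat.even_iff.mp hk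
      apply master (z.drop k) []
      · exact Or.inl rfl
      · intro m
        have hsplit : z.countP (fun v => decide (v ∈ I m)) =
            (z.take k).countP (fun v => decide (v ∈ I m)) +
            (z.drop k).countP (fun v => decide (v ∈ I m)) := by
          conv_lhs => rw [← List.take_append_drop k z]
          rw [List.countP_append]
        have := hcount m
        omega
      · simp only [List.length_nil, List.length_drop, hlen, Nat.zero_add]
        rw [Nat.even_iff]
        omega
      · intro h2
        obtain ⟨w0, a, b, hz, hab⟩ := hlast
        have hw0 : w0.length = 2 * p - 2 := by
          have := congrArg List.length hz
          simp only [List.length_append, List.length_cons, List.length_nil, hlen] at this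
          omega
        have hkle : k ≤ w0.length := by omega
        refine ⟨w0.drop k, a, b, ?_, hab⟩
        rw [hz, List.drop_append_of_le_length hkle]
    · rw [List.drop_eq_nil_of_le (by omega : z.length ≤ k)]
      simp
end

section
/- In a connected graph, for any two vertices i and j at odd distance p, the word y = i_1 i_2 ... i_{p−1} consisting of the internal vertices of a shortest path i − i_1 − ... − i_{p−1} − j is an erasing word of ij under any admissible policy: both y and i j y are completely matchable, with the matching of i j y pairing i with i_1, i_2 with i_3, ..., i_{p−1} with j. -/
variable {V : Type*} [Fintype V] [DecidableEq V]

/-- The list `c a, c (a+1), …, c (a+n-1)`. -/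
def pl (c : ℕ → V) : ℕ → ℕ → List V
  | _, 0 => []
  | a, n+1 => c a :: pl c (a+1) n

lemma pl_eq_ofFn (c : ℕ → V) : ∀ (n a : ℕ),
    pl c a n = List.ofFn (fun t : Fin n => c ((t : ℕ) + a)) := by
  intro n
  induction n with
  | zero => intro a; simp [pl]
  | succ n ih =>
    intro a
    rw [List.ofFn_succ]
    simp only [pl, Fin.val_zero, Nat.zero_add]
    congr 1
    rw [ih (a+1)]
    congr 1
    funext t
    congr 1
    simp [Fin.val_succ]
    omega

section aux

variable (G : SimpleGraph V) (p : ℕ) (c : ℕ → V)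
  (step : List V → V → List V)

/-- Processing the even-length word `c a, …, c (a+2m-1)` from the empty state ends empty. -/
lemma fold_even
    (hadj : ∀ k < p, G.Adj (c k) (c (k + 1)))
    (hmatch : ∀ (w : List V) (v : V), (∃ u ∈ w, G.Adj u v) →
      ∃ k : Fin w.length, G.Adj (w.get k) v ∧ step w v = w.eraseIdx k)
    (hnomatch : ∀ (w : List V) (v : V), (¬ ∃ u ∈ w, G.Adj u v) → step w v = w ++ [v]) :
    ∀ (m a : ℕ), a + 2*m ≤ p → (pl c a (2*m)).foldl step [] = [] := by
  intro m
  induction m with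
  | zero => intro a _; simp [pl]
  | succ m ih =>
    intro a ha
    have h2 : 2*(m+1) = (2*m + 1) + 1 := by ring
    rw [h2]
    show List.foldl step [] (c a :: c (a+1) :: pl c (a+1+1) (2*m)) = []
    simp only [List.foldl_cons]
    have hs1 : step [] (c a) = [c a] := by
      rw [hnomatch]; · rfl
      rintro ⟨u, hu, -⟩; simp at hu
    rw [hs1]
    obtain ⟨k, -, hk⟩ := hmatch [c a] (c (a+1)) ⟨c a, by simp, hadj a (by omega)⟩
    have hk0 : (k : ℕ) = 0 := by
      have h := k.isLt
      simp only [List.length_singleton] at h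
      omega
    rw [hk, hk0]
    simpa using ih (a+2) (by omega)

/-- Processing the odd-length word `c a, …, c (p-1)` from the state `[c p]` ends empty. -/
lemma fold_odd
    (hadj : ∀ k < p, G.Adj (c k) (c (k + 1)))
    (hnadj : ∀ k l, k + 2 ≤ l → l ≤ p → ¬ G.Adj (c k) (c l))
    (hmatch : ∀ (w : List V) (v : V), (∃ u ∈ w, G.Adj u v) →
      ∃ k : Fin w.length, G.Adj (w.get k) v ∧ step w v = w.eraseIdx k)
    (hnomatch : ∀ (w : List V) (v : V), (¬ ∃ u ∈ w, G.Adj u v) → step w v = w ++ [v]) :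
    ∀ (m a : ℕ), a + (2*m+1) = p → (pl c a (2*m+1)).foldl step [c p] = [] := by
  intro m
  induction m with
  | zero =>
    intro a ha
    show List.foldl step [c p] [c a] = []
    simp only [List.foldl_cons, List.foldl_nil]
    obtain ⟨k, -, hk⟩ := hmatch [c p] (c a)
      ⟨c p, by simp, by
        have : a + 1 = p := by omega
        have h := (hadj a (by omega)).symm
        rwa [this] at h⟩
    have hk0 : (k : ℕ) = 0 := by
      have h := k.isLt
      simp only [List.length_singleton] at h
      omega
    rw [hk, hk0]; rfl
  | succ m ih =>
    intro a ha
    have h2 : 2*(m+1)+1 = ((2*m+1) + 1) + 1 := by ring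
    rw [h2]
    show List.foldl step [c p] (c a :: c (a+1) :: pl c (a+1+1) (2*m+1)) = []
    simp only [List.foldl_cons]
    have hs1 : step [c p] (c a) = [c p, c a] := by
      rw [hnomatch]; · rfl
      rintro ⟨u, hu, hA⟩
      simp at hu; subst hu
      exact hnadj a p (by omega) le_rfl hA.symm
    rw [hs1]
    obtain ⟨k, hkadj, hk⟩ := hmatch [c p, c a] (c (a+1))
      ⟨c a, by simp, hadj a (by omega)⟩
    have hk2 := k.isLt
    simp only [List.length_cons, List.length_nil] at hk2
    have hk1 : (k : ℕ) = 1 := by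
      rcases (by omega : (k : ℕ) = 0 ∨ (k : ℕ) = 1) with h0 | h1
      · exfalso
        have hget : ([c p, c a].get k) = c p := by
          have : k = (⟨0, by simp⟩ : Fin ([c p, c a].length)) := by
            apply Fin.ext; simpa using h0
          rw [this]; rfl
        rw [hget] at hkadj
        exact hnadj (a+1) p (by omega) le_rfl hkadj.symm
      · exact h1
    rw [hk, hk1]
    show List.foldl step [c p] (pl c (a+2) (2*m+1)) = []
    exact ih (a+2) (by omega)

end aux

/-- If `i` and `j` are at odd distance `p ≥ 3` in a connected graph, and
`i = c_0 − c_1 − ⋯ − c_p = j` is a shortest path, then the word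
`y = c_1 c_2 … c_{p-1}` of internal vertices is an erasing word of `ij` under any
admissible matching policy: both `y` and `i j y` are completely matchable. -/
theorem odd_path_erasing_word (G : SimpleGraph V)
    (p : ℕ) (hodd : Odd p) (hp : 3 ≤ p) (i j : V) (c : ℕ → V)
    (hc0 : c 0 = i) (hcp : c p = j)
    (hadj : ∀ k < p, G.Adj (c k) (c (k + 1)))
    (hdist : G.dist i j = p)
    (step : List V → V → List V)
    (hmatch : ∀ (w : List V) (v : V), (∃ u ∈ w, G.Adj u v) →
      ∃ k : Fin w.length, G.Adj (w.get k) v ∧ step w v = w.eraseIdx k)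
    (hnomatch : ∀ (w : List V) (v : V), (¬ ∃ u ∈ w, G.Adj u v) → step w v = w ++ [v]) :
    (List.ofFn (fun t : Fin (p - 1) => c ((t : ℕ) + 1))).foldl step [] = [] ∧
      (i :: j :: List.ofFn (fun t : Fin (p - 1) => c ((t : ℕ) + 1))).foldl step []
        = [] := by
  -- walks along segments of the path
  have hseg : ∀ (n a : ℕ), a + n ≤ p → ∃ w : G.Walk (c a) (c (a + n)), w.length = n := by
    intro n
    induction n with
    | zero => intro a _; exact ⟨SimpleGraph.Walk.nil, rfl⟩
    | succ n ih =>
      intro a ha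
      obtain ⟨w, hw⟩ := ih a (by omega)
      refine ⟨w.concat (hadj (a + n) (by omega)), ?_⟩
      rw [SimpleGraph.Walk.length_concat, hw]
  -- minimality: any walk from `c k` to `c l` has length at least `l - k`
  have key : ∀ k l, k ≤ l → l ≤ p → ∀ w : G.Walk (c k) (c l), l - k ≤ w.length := by
    intro k l hkl hl w
    obtain ⟨w1, h1⟩ := hseg k 0 (by omega)
    obtain ⟨w2, h2⟩ := hseg (p - l) l (by omega)
    have e1 : c (0 + k) = c k := by rw [Nat.zero_add]
    have e2 : c (l + (p - l)) = c p := by congr 1; omega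
    have hle := G.dist_le
      ((((w1.copy rfl e1).append w).append (w2.copy rfl e2)).copy hc0 hcp)
    rw [hdist] at hle
    simp only [SimpleGraph.Walk.length_copy, SimpleGraph.Walk.length_append, h1, h2] at hle
    omega
  have hnadj : ∀ k l, k + 2 ≤ l → l ≤ p → ¬ G.Adj (c k) (c l) := by
    intro k l hkl hl hA
    have := key k l (by omega) hl (SimpleGraph.Walk.cons hA SimpleGraph.Walk.nil)
    simp at this; omega
  obtain ⟨q, hq⟩ := hodd
  have hq1 : 1 ≤ q := by omega
  constructor
  · rw [← pl_eq_ofFn]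
    have : p - 1 = 2 * q := by omega
    rw [this]
    exact fold_even G p c step hadj hmatch hnomatch q 1 (by omega)
  · rw [← pl_eq_ofFn]
    simp only [List.foldl_cons]
    have hs1 : step [] i = [i] := by
      rw [hnomatch]; · rfl
      rintro ⟨u, hu, -⟩; simp at hu
    rw [hs1]
    have hs2 : step [i] j = [i, j] := by
      rw [hnomatch]; · rfl
      rintro ⟨u, hu, hA⟩
      simp at hu; subst hu
      rw [← hc0, ← hcp] at hA
      exact hnadj 0 p (by omega) le_rfl hA
    rw [hs2]
    have hsplit : p - 1 = (2 * (q - 1) + 1) + 1 := by omega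
    rw [hsplit]
    show List.foldl step [i, j] (c 1 :: pl c (1+1) (2*(q-1)+1)) = []
    simp only [List.foldl_cons]
    have hs3 : step [i, j] (c 1) = [j] := by
      obtain ⟨k, hkadj, hk⟩ := hmatch [i, j] (c 1)
        ⟨i, by simp, by rw [← hc0]; exact hadj 0 (by omega)⟩
      have hk2 := k.isLt
      simp only [List.length_cons, List.length_nil] at hk2
      have hk0 : (k : ℕ) = 0 := by
        rcases (by omega : (k : ℕ) = 0 ∨ (k : ℕ) = 1) with h0 | h1
        · exact h0
        · exfalso
          have hget : ([i, j].get k) = j := by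
            have : k = (⟨1, by simp⟩ : Fin ([i, j].length)) := by
              apply Fin.ext; simpa using h1
            rw [this]; rfl
          rw [hget, ← hcp] at hkadj
          exact hnadj 1 p (by omega) le_rfl hkadj.symm
      rw [hk, hk0]; rfl
    rw [hs3, ← hcp]
    exact fold_odd G p c step hadj hnadj hmatch hnomatch (q - 1) 2 (by omega)
end
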